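/- Let E be a real inner product space, Z ⊆ E a nonempty convex set, G : E → ℝ a convex Fréchet-differentiable function with L-Lipschitz gradient (L > 0), H : Z → E monotone on Z and satisfying the (M, δ)-condition on Z (M > 0, δ ≥ 0), and V a Bregman-type distance on Z. Fix N ≥ 1 and set γ_k = 2/(k+1), β_k = 2L/k, T_k = ⌈k·M/L⌉, η_k^t = β_k·(t−1) + L·T_k/k. Let z₀ ∈ Z, z̄₀ = z₀, and for k = 1, …, N define z̲_k = (1−γ_k)·z̄_{k−1} + γ_k·z_{k−1}, let z_k⁰ = z_{k−1} and let z_k¹, …, z_k^{T_k}, z̃_k¹, …, z̃_k^{T_k} ∈ Z satisfy, for every t = 1, …, T_k and every z ∈ Z, the prox inequality ⟨∇G(z̲_k), z̃_k^t − z⟩ + ⟨H(z̃_k^t), z_k^t − z⟩ + ⟨H(z_k^{t−1}), z̃_k^t − z_k^t⟩ ≤ β_k·(V(z_{k−1}, z) − V(z_k^t, z) − V(z_{k−1}, z̃_k^t) − V(z̃_k^t, z_k^t)) + η_k^t·(V(z_k^{t−1}, z) − V(z_k^t, z) − V(z_k^{t−1}, z̃_k^t) − V(z̃_k^t, z_k^t));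 set z_k = z_k^{T_k}, z̃_k = (1/T_k)·Σ_{t=1}^{T_k} z̃_k^t, and z̄_k = (1−γ_k)·z̄_{k−1} + γ_k·z̃_k. Then for every z ∈ Z: G(z̄_N) − G(z) + ⟨H(z), z̄_N − z⟩ ≤ 6·L·V(z₀, z)/N² + δ. -/

import Mathlib

open RealInnerProductSpace Finset

section helpers
variable {E : Type*} [NormedAddCommGroup E] [InnerProductSpace ℝ E] [CompleteSpace E]

theorem mps_tel (f : ℕ → ℝ) (T : ℕ) :
    ∑ t ∈ Icc 1 T, (f (t - 1) - f t) = f 0 - f T := by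
  induction T with
  | zero => simp
  | succ n ih =>
    rw [Finset.sum_Icc_succ_top (Nat.le_add_left 1 n), ih]
    simp only [Nat.add_sub_cancel]
    ring

theorem mps_line_deriv (G : E → ℝ) (G' : E → E) (hGdiff : ∀ x : E, HasGradientAt G (G' x) x)
    (x d : E) (t : ℝ) :
    HasDerivAt (fun s : ℝ => G (x + s • d)) ⟪G' (x + t • d), d⟫ t := by
  have hc : HasDerivAt (fun s : ℝ => x + s • d) d t := by
    simpa using ((hasDerivAt_id t).smul_const d).const_add x
  have hf := (hasGradientAt_iff_hasFDerivAt.mp (hGdiff (x + t • d)))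
  exact hf.comp_hasDerivAt t hc

theorem mps_descent (G : E → ℝ) (G' : E → E) (hGdiff : ∀ x : E, HasGradientAt G (G' x) x)
    (L : ℝ) (hL : 0 < L) (hGLip : ∀ x y : E, ‖G' x - G' y‖ ≤ L * ‖x - y‖) (x y : E) :
    G y ≤ G x + ⟪G' x, y - x⟫ + L / 2 * ‖y - x‖ ^ 2 := by
  set d := y - x with hd
  have hG'cont : Continuous G' := by
    have : LipschitzWith L.toNNReal G' := by
      intro a b
      rw [edist_dist, edist_dist, dist_eq_norm, dist_eq_norm]
      rw [← ENNReal.ofReal_coe_nnreal]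
      rw [← ENNReal.ofReal_mul (by positivity)]
      apply ENNReal.ofReal_le_ofReal
      rw [Real.coe_toNNReal _ hL.le]
      exact hGLip a b
    exact this.continuous
  have hcont : Continuous fun t : ℝ => ⟪G' (x + t • d), d⟫ := by
    exact Continuous.inner (hG'cont.comp (by continuity)) continuous_const
  have hFTC : ∫ t in (0:ℝ)..1, ⟪G' (x + t • d), d⟫ = G (x + (1:ℝ) • d) - G (x + (0:ℝ) • d) := by
    exact intervalIntegral.integral_eq_sub_of_hasDerivAt
      (fun t _ => mps_line_deriv G G' hGdiff x d t) (hcont.intervalIntegrable 0 1)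
  have h1 : x + (1:ℝ) • d = y := by simp [hd]
  have h0 : x + (0:ℝ) • d = x := by simp
  rw [h1, h0] at hFTC
  have hmono : ∫ t in (0:ℝ)..1, (⟪G' (x + t • d), d⟫ - ⟪G' x, d⟫)
      ≤ ∫ t in (0:ℝ)..1, L * ‖d‖ ^ 2 * t := by
    apply intervalIntegral.integral_mono_on zero_le_one
    · exact ((hcont.sub continuous_const).intervalIntegrable 0 1)
    · exact ((continuous_const.mul continuous_id).intervalIntegrable 0 1)
    · intro t ht
      have h1 : ⟪G' (x + t • d), d⟫ - ⟪G' x, d⟫ = ⟪G' (x + t • d) - G' x, d⟫ := by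
        rw [inner_sub_left]
      rw [h1]
      calc ⟪G' (x + t • d) - G' x, d⟫ ≤ ‖G' (x + t • d) - G' x‖ * ‖d‖ := real_inner_le_norm _ _
        _ ≤ (L * ‖(x + t • d) - x‖) * ‖d‖ :=
            mul_le_mul_of_nonneg_right (hGLip _ _) (norm_nonneg _)
        _ = L * ‖d‖ ^ 2 * t := by
            simp only [add_sub_cancel_left, norm_smul, Real.norm_eq_abs,
              abs_of_nonneg ht.1]
            ring
  have hval : ∫ t in (0:ℝ)..1, L * ‖d‖ ^ 2 * t = L / 2 * ‖d‖ ^ 2 := by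
    rw [intervalIntegral.integral_const_mul]
    simp [integral_id]
    ring
  have hsplit : ∫ t in (0:ℝ)..1, (⟪G' (x + t • d), d⟫ - ⟪G' x, d⟫)
      = (G y - G x) - ⟪G' x, d⟫ := by
    rw [intervalIntegral.integral_sub (hcont.intervalIntegrable 0 1)
      (continuous_const.intervalIntegrable 0 1), hFTC]
    simp
  rw [hsplit, hval] at hmono
  linarith

theorem mps_grad_lower (G : E → ℝ) (G' : E → E) (hGconv : ConvexOn ℝ Set.univ G)
    (hGdiff : ∀ x : E, HasGradientAt G (G' x) x) (x y : E) :
    G x + ⟪G' x, y - x⟫ ≤ G y := by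
  set d := y - x with hd
  have hφ : HasDerivAt (fun s : ℝ => G (x + s • d)) ⟪G' x, d⟫ 0 := by
    have := mps_line_deriv G G' hGdiff x d 0
    simpa using this
  have hconvφ : ConvexOn ℝ Set.univ (fun s : ℝ => G (x + s • d)) := by
    have := hGconv.comp_affineMap (AffineMap.lineMap x y : ℝ →ᵃ[ℝ] E)
    have heq : (G ∘ (AffineMap.lineMap x y : ℝ →ᵃ[ℝ] E)) = fun s : ℝ => G (x + s • d) := by
      funext s
      simp only [AffineMap.lineMap_apply, Function.comp_apply, vsub_eq_sub, vadd_eq_add, hd]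
      rw [add_comm]
    rw [heq] at this
    simpa using this
  have := hconvφ.le_slope_of_hasDerivAt (Set.mem_univ (0:ℝ)) (Set.mem_univ (1:ℝ)) zero_lt_one hφ
  rw [slope_def_field] at this
  simp at this
  have h1 : x + d = y := by simp [hd]
  rw [h1] at this
  linarith

end helpers

set_option maxHeartbeats 1000000 in
theorem mps_deterministic_convergence
    {E : Type*} [NormedAddCommGroup E] [InnerProductSpace ℝ E] [CompleteSpace E]
    (Z : Set E) (hZne : Z.Nonempty) (hZconv : Convex ℝ Z)
    (G : E → ℝ) (G' : E → E)
    (hGconv : ConvexOn ℝ Set.univ G)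
    (hGdiff : ∀ x : E, HasGradientAt G (G' x) x)
    (L : ℝ) (hL : 0 < L)
    (hGLip : ∀ x y : E, ‖G' x - G' y‖ ≤ L * ‖x - y‖)
    (H : E → E) (M δ : ℝ) (hM : 0 < M) (hδ : 0 ≤ δ)
    (hmono : ∀ u ∈ Z, ∀ v ∈ Z, 0 ≤ ⟪H u - H v, u - v⟫)
    (hMδ : ∀ z₁ ∈ Z, ∀ z₂ ∈ Z, ∀ z₃ ∈ Z,
      ⟪H z₁ - H z₂, z₁ - z₃⟫ ≤ M / 2 * ‖z₁ - z₂‖ ^ 2 + M / 2 * ‖z₁ - z₃‖ ^ 2 + δ)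
    (V : E → E → ℝ)
    (hVlb : ∀ u ∈ Z, ∀ w ∈ Z, 1 / 2 * ‖u - w‖ ^ 2 ≤ V u w)
    (hVzero : ∀ u ∈ Z, V u u = 0)
    (hVconv : ∀ u ∈ Z, ConvexOn ℝ Z (V u))
    (N : ℕ) (hN : 1 ≤ N)
    (γ β : ℕ → ℝ) (T : ℕ → ℕ) (η : ℕ → ℕ → ℝ)
    (hγ : ∀ k : ℕ, γ k = 2 / ((k : ℝ) + 1))
    (hβ : ∀ k : ℕ, β k = 2 * L / (k : ℝ))
    (hT : ∀ k : ℕ, T k = ⌈(k : ℝ) * M / L⌉₊)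
    (hη : ∀ k t : ℕ, η k t = β k * ((t : ℝ) - 1) + L * (T k : ℝ) / (k : ℝ))
    (zseq zbar zund ztil : ℕ → E) (zin ztin : ℕ → ℕ → E)
    (hz0 : zseq 0 ∈ Z) (hzbar0 : zbar 0 = zseq 0)
    (hstep : ∀ k ∈ Icc 1 N,
      zund k = (1 - γ k) • zbar (k - 1) + γ k • zseq (k - 1) ∧
      zin k 0 = zseq (k - 1) ∧
      (∀ t ∈ Icc 1 (T k), zin k t ∈ Z ∧ ztin k t ∈ Z) ∧
      (∀ t ∈ Icc 1 (T k), ∀ z ∈ Z,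
        ⟪G' (zund k), ztin k t - z⟫ + ⟪H (ztin k t), zin k t - z⟫
            + ⟪H (zin k (t - 1)), ztin k t - zin k t⟫
          ≤ β k * (V (zseq (k - 1)) z - V (zin k t) z - V (zseq (k - 1)) (ztin k t)
                - V (ztin k t) (zin k t))
            + η k t * (V (zin k (t - 1)) z - V (zin k t) z - V (zin k (t - 1)) (ztin k t)
                - V (ztin k t) (zin k t))) ∧
      zseq k = zin k (T k) ∧
      ztil k = (T k : ℝ)⁻¹ • ∑ t ∈ Icc 1 (T k), ztin k t ∧
      zbar k = (1 - γ k) • zbar (k - 1) + γ k • ztil k) :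
    ∀ z ∈ Z,
      G (zbar N) - G z + ⟪H z, zbar N - z⟫ ≤ 6 * L * V (zseq 0) z / (N : ℝ) ^ 2 + δ := by
  intro z hz
  have hT1 : ∀ k : ℕ, 1 ≤ k → 1 ≤ T k := by
    intro k hk
    have hk0 : (0:ℝ) < k := by exact_mod_cast hk
    rw [hT k]
    exact Nat.ceil_pos.mpr (by positivity)
  have hzseqZ : ∀ k, k ≤ N → zseq k ∈ Z := by
    intro k
    induction k with
    | zero => intro _; exact hz0
    | succ n _ =>
      intro hn
      obtain ⟨_, _, hmem', _, hzk, _, _⟩ := hstep (n+1)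
        (mem_Icc.mpr ⟨Nat.succ_le_succ (Nat.zero_le n), hn⟩)
      rw [hzk]
      exact (hmem' (T (n+1))
        (mem_Icc.mpr ⟨hT1 _ (Nat.succ_le_succ (Nat.zero_le n)), le_refl _⟩)).1
  -- the one-step recursion
  have key : ∀ k : ℕ, 1 ≤ k → k ≤ N →
      (k:ℝ) * ((k:ℝ)+1) * (G (zbar k) - G z + ⟪H z, zbar k - z⟫) + 6*L*V (zseq k) z
        ≤ ((k:ℝ)-1) * (k:ℝ) * (G (zbar (k-1)) - G z + ⟪H z, zbar (k-1) - z⟫)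
          + 2*(k:ℝ)*δ + 6*L*V (zseq (k-1)) z := by
    intro k hk1 hkN
    obtain ⟨hund, hzin0, hmem', hprox, hzk, htil, hbar⟩ := hstep k (mem_Icc.mpr ⟨hk1, hkN⟩)
    have hk0 : (0:ℝ) < k := by exact_mod_cast hk1
    have hTk1 : 1 ≤ T k := hT1 k hk1
    have hTk0 : (0:ℝ) < (T k : ℝ) := by exact_mod_cast hTk1
    have card_eq : (Icc 1 (T k)).card = T k := by rw [Nat.card_Icc]; omega
    have huZ : zseq (k-1) ∈ Z := hzseqZ (k-1) (le_trans (Nat.sub_le k 1) hkN)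
    have hzkZ : zseq k ∈ Z := hzseqZ k hkN
    have hβpos : 0 < β k := by rw [hβ]; positivity
    have hLTk : M ≤ L * (T k : ℝ) / (k:ℝ) := by
      have h1 : (k:ℝ) * M / L ≤ (T k : ℝ) := by rw [hT]; exact Nat.le_ceil _
      have h2 := mul_le_mul_of_nonneg_left h1 hL.le
      rw [le_div_iff₀ hk0]
      calc M * (k:ℝ) = L * ((k:ℝ)*M/L) := by field_simp
        _ ≤ L * (T k : ℝ) := h2
    have hηlb : ∀ t : ℕ, 1 ≤ t → M ≤ η k t := by
      intro t ht
      rw [hη]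
      have h1 : (0:ℝ) ≤ (t:ℝ) - 1 := by
        have : (1:ℝ) ≤ (t:ℝ) := by exact_mod_cast ht
        linarith
      nlinarith [mul_nonneg hβpos.le h1, hLTk]
    have hηsucc : ∀ t : ℕ, η k (t+1) = η k t + β k := by
      intro t; rw [hη, hη]; push_cast; ring
    have hzinZ : ∀ t : ℕ, t ≤ T k → zin k t ∈ Z := by
      intro t ht
      rcases Nat.eq_zero_or_pos t with h | h
      · rw [h, hzin0]; exact huZ
      · exact (hmem' t (mem_Icc.mpr ⟨h, ht⟩)).1
    have hztilZ : ztil k ∈ Z := by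
      rw [htil, Finset.smul_sum]
      exact hZconv.sum_mem (fun i _ => by positivity)
        (by rw [Finset.sum_const, card_eq, nsmul_eq_mul]; field_simp)
        (fun i hi => (hmem' i hi).2)
    -- per-inner-step inequality, telescoping-ready
    have St : ∀ t ∈ Icc 1 (T k),
        ⟪G' (zund k) + H z, ztin k t - z⟫ + β k * V (zseq (k-1)) (ztin k t)
          ≤ δ + β k * V (zseq (k-1)) z
            + ((fun s => η k (s+1) * V (zin k s) z) (t-1)
              - (fun s => η k (s+1) * V (zin k s) z) t) := by
      intro t ht
      obtain ⟨ht1, htT⟩ := mem_Icc.mp ht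
      have hvtZ : ztin k t ∈ Z := (hmem' t ht).2
      have hwtZ : zin k t ∈ Z := (hmem' t ht).1
      have hwt'Z : zin k (t-1) ∈ Z := hzinZ (t-1) (le_trans (Nat.sub_le t 1) htT)
      have e1 := hprox t ht z hz
      have e2 := hMδ (ztin k t) hvtZ (zin k (t-1)) hwt'Z (zin k t) hwtZ
      have e3 := hVlb (zin k (t-1)) hwt'Z (ztin k t) hvtZ
      have e4 := hVlb (ztin k t) hvtZ (zin k t) hwtZ
      have e5 := hmono (ztin k t) hvtZ z hz
      have hηt := hηlb t ht1
      have nn1 : 0 ≤ V (zin k (t-1)) (ztin k t) := le_trans (by positivity) e3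
      have nn2 : 0 ≤ V (ztin k t) (zin k t) := le_trans (by positivity) e4
      have p1 : M * V (zin k (t-1)) (ztin k t) ≤ η k t * V (zin k (t-1)) (ztin k t) :=
        mul_le_mul_of_nonneg_right hηt nn1
      have p2 : M * V (ztin k t) (zin k t) ≤ (η k t + β k) * V (ztin k t) (zin k t) := by
        apply mul_le_mul_of_nonneg_right _ nn2; linarith
      have q1 : M / 2 * ‖zin k (t-1) - ztin k t‖ ^ 2 ≤ M * V (zin k (t-1)) (ztin k t) := by
        have := mul_le_mul_of_nonneg_left e3 hM.le; linarith
      have q2 : M / 2 * ‖ztin k t - zin k t‖ ^ 2 ≤ M * V (ztin k t) (zin k t) := by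
        have := mul_le_mul_of_nonneg_left e4 hM.le; linarith
      have hnorm : ‖ztin k t - zin k (t-1)‖ = ‖zin k (t-1) - ztin k t‖ := norm_sub_rev _ _
      simp only
      rw [Nat.sub_add_cancel ht1, hηsucc t]
      rw [hnorm] at e2
      simp only [inner_add_left, inner_sub_left, inner_sub_right] at e1 e2 e5 ⊢
      linarith [e1, e2, e5, p1, p2, q1, q2]
    have hsum := Finset.sum_le_sum St
    -- rewrite left side of summed inequality
    have hztilsum : (T k : ℝ) • ztil k = ∑ t ∈ Icc 1 (T k), ztin k t := by
      rw [htil, smul_inv_smul₀ hTk0.ne']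
    have hsub : ∑ t ∈ Icc 1 (T k), (ztin k t - z) = (T k : ℝ) • (ztil k - z) := by
      rw [Finset.sum_sub_distrib, Finset.sum_const, card_eq, smul_sub, hztilsum,
        Nat.cast_smul_eq_nsmul]
    have hL1 : ∑ t ∈ Icc 1 (T k), ⟪G' (zund k) + H z, ztin k t - z⟫
        = (T k : ℝ) * ⟪G' (zund k) + H z, ztil k - z⟫ := by
      rw [← inner_sum, hsub, real_inner_smul_right]
    have hLHS : ∑ t ∈ Icc 1 (T k),
        (⟪G' (zund k) + H z, ztin k t - z⟫ + β k * V (zseq (k-1)) (ztin k t))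
        = (T k : ℝ) * ⟪G' (zund k) + H z, ztil k - z⟫
          + β k * ∑ t ∈ Icc 1 (T k), V (zseq (k-1)) (ztin k t) := by
      rw [Finset.sum_add_distrib, hL1, ← Finset.mul_sum]
    have hRHS : ∑ t ∈ Icc 1 (T k),
        (δ + β k * V (zseq (k-1)) z
          + ((fun s => η k (s+1) * V (zin k s) z) (t-1)
            - (fun s => η k (s+1) * V (zin k s) z) t))
        = (T k : ℝ) * (δ + β k * V (zseq (k-1)) z)
          + (η k 1 * V (zin k 0) z - η k (T k + 1) * V (zin k (T k)) z) := by
      rw [Finset.sum_add_distrib, Finset.sum_const, card_eq, nsmul_eq_mul,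
        mps_tel (fun s => η k (s+1) * V (zin k s) z) (T k)]
    rw [hLHS, hRHS] at hsum
    have h6 : η k 1 * V (zin k 0) z = (L * (T k:ℝ)/(k:ℝ)) * V (zseq (k-1)) z := by
      rw [hzin0, hη]; norm_num
    have h7 : η k (T k + 1) * V (zin k (T k)) z
        = (β k * (T k:ℝ) + L * (T k:ℝ)/(k:ℝ)) * V (zseq k) z := by
      rw [← hzk, hη]; push_cast; ring_nf
    rw [h6, h7] at hsum
    -- Jensen
    have hjen : V (zseq (k-1)) (ztil k)
        ≤ ∑ t ∈ Icc 1 (T k), (T k:ℝ)⁻¹ * V (zseq (k-1)) (ztin k t) := by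
      have h := (hVconv _ huZ).map_sum_le (w := fun _ : ℕ => (T k:ℝ)⁻¹)
        (p := fun t => ztin k t) (t := Icc 1 (T k))
        (fun i _ => by positivity)
        (by rw [Finset.sum_const, card_eq, nsmul_eq_mul]; field_simp)
        (fun i hi => (hmem' i hi).2)
      rw [← Finset.smul_sum, ← htil] at h
      simpa [smul_eq_mul] using h
    have hjen' : (T k:ℝ) * V (zseq (k-1)) (ztil k)
        ≤ ∑ t ∈ Icc 1 (T k), V (zseq (k-1)) (ztin k t) := by
      rw [← Finset.mul_sum] at hjen
      have := mul_le_mul_of_nonneg_left hjen hTk0.le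
      rwa [← mul_assoc, mul_inv_cancel₀ hTk0.ne', one_mul] at this
    have hjen'' := mul_le_mul_of_nonneg_left hjen' hβpos.le
    have hmain : (T k:ℝ) * (⟪G' (zund k) + H z, ztil k - z⟫ + β k * V (zseq (k-1)) (ztil k))
        ≤ (T k:ℝ) * (δ + (β k + L/(k:ℝ)) * (V (zseq (k-1)) z - V (zseq k) z)) := by
      ring_nf at hsum hjen'' ⊢
      linarith [hsum, hjen'']
    have inner_k : ⟪G' (zund k), ztil k - z⟫ + ⟪H z, ztil k - z⟫
        + β k * V (zseq (k-1)) (ztil k)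
        ≤ δ + (β k + L/(k:ℝ)) * (V (zseq (k-1)) z - V (zseq k) z) := by
      have h := le_of_mul_le_mul_left hmain hTk0
      rw [inner_add_left] at h
      linarith
    -- outer step
    have hγ0 : 0 ≤ γ k := by rw [hγ]; positivity
    have hγ1 : γ k ≤ 1 := by
      rw [hγ, div_le_one (by positivity)]
      have : (1:ℝ) ≤ (k:ℝ) := by exact_mod_cast hk1
      linarith
    have hid1 : zbar k - zund k = γ k • (ztil k - zseq (k-1)) := by
      rw [hbar, hund]; module
    have hid2 : zbar k - zund k = (1 - γ k) • (zbar (k-1) - zund k)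
        + γ k • (ztil k - z) + γ k • (z - zund k) := by
      rw [hbar]; module
    have hid3 : zbar k - z = (1 - γ k) • (zbar (k-1) - z) + γ k • (ztil k - z) := by
      rw [hbar]; module
    have hdesc := mps_descent G G' hGdiff L hL hGLip (zund k) (zbar k)
    have hcv1 := mps_grad_lower G G' hGconv hGdiff (zund k) (zbar (k-1))
    have hcv2 := mps_grad_lower G G' hGconv hGdiff (zund k) z
    have hnq : ‖zbar k - zund k‖ ^ 2 = (γ k)^2 * ‖ztil k - zseq (k-1)‖^2 := by
      rw [hid1, norm_smul, Real.norm_eq_abs, abs_of_nonneg hγ0, mul_pow]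
    have hip1 : ⟪G' (zund k), zbar k - zund k⟫
        = (1-γ k) * ⟪G' (zund k), zbar (k-1) - zund k⟫
          + γ k * ⟪G' (zund k), ztil k - z⟫ + γ k * ⟪G' (zund k), z - zund k⟫ := by
      rw [hid2, inner_add_right, inner_add_right, real_inner_smul_right,
        real_inner_smul_right, real_inner_smul_right]
    have hip2 : ⟪H z, zbar k - z⟫
        = (1-γ k) * ⟪H z, zbar (k-1) - z⟫ + γ k * ⟪H z, ztil k - z⟫ := by
      rw [hid3, inner_add_right, real_inner_smul_right, real_inner_smul_right]
    have hVq : L/(k:ℝ) * ‖ztil k - zseq (k-1)‖^2 ≤ β k * V (zseq (k-1)) (ztil k) := by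
      have hlb := hVlb (zseq (k-1)) huZ (ztil k) hztilZ
      have hns : ‖ztil k - zseq (k-1)‖ = ‖zseq (k-1) - ztil k‖ := norm_sub_rev _ _
      rw [hβ, hns]
      have h2 := mul_le_mul_of_nonneg_left hlb (by positivity : (0:ℝ) ≤ 2*L/(k:ℝ))
      calc L/(k:ℝ) * ‖zseq (k-1) - ztil k‖^2
          = 2*L/(k:ℝ) * (1/2 * ‖zseq (k-1) - ztil k‖^2) := by ring
        _ ≤ 2*L/(k:ℝ) * V (zseq (k-1)) (ztil k) := h2
    have hquad : L/2 * ((γ k)^2 * ‖ztil k - zseq (k-1)‖^2)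
        ≤ γ k * (L/(k:ℝ) * ‖ztil k - zseq (k-1)‖^2) := by
      have hcoef : L/2 * (γ k)^2 ≤ γ k * (L/(k:ℝ)) := by
        rw [hγ]
        have hk1' : (0:ℝ) < (k:ℝ)+1 := by linarith
        have e1 : L/2*(2/((k:ℝ)+1))^2 = 2*L/(((k:ℝ)+1)*((k:ℝ)+1)) := by
          field_simp
        have e2 : 2/((k:ℝ)+1)*(L/(k:ℝ)) = 2*L/((k:ℝ)*((k:ℝ)+1)) := by
          field_simp
        rw [e1, e2]
        apply div_le_div_of_nonneg_left (by positivity) (by positivity) (by nlinarith)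
      calc L/2 * ((γ k)^2 * ‖ztil k - zseq (k-1)‖^2)
          = (L/2 * (γ k)^2) * ‖ztil k - zseq (k-1)‖^2 := by ring
        _ ≤ (γ k * (L/(k:ℝ))) * ‖ztil k - zseq (k-1)‖^2 :=
            mul_le_mul_of_nonneg_right hcoef (sq_nonneg _)
        _ = γ k * (L/(k:ℝ) * ‖ztil k - zseq (k-1)‖^2) := by ring
    have c1 : (1-γ k) * (G (zund k) + ⟪G' (zund k), zbar (k-1) - zund k⟫)
        ≤ (1-γ k) * G (zbar (k-1)) := mul_le_mul_of_nonneg_left hcv1 (by linarith)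
    have c2 : γ k * (G (zund k) + ⟪G' (zund k), z - zund k⟫) ≤ γ k * G z :=
      mul_le_mul_of_nonneg_left hcv2 hγ0
    have c3 := mul_le_mul_of_nonneg_left inner_k hγ0
    have c4 := mul_le_mul_of_nonneg_left hVq hγ0
    have step : G (zbar k) - G z + ⟪H z, zbar k - z⟫
        ≤ (1-γ k) * (G (zbar (k-1)) - G z + ⟪H z, zbar (k-1) - z⟫)
          + γ k * δ + γ k * ((β k + L/(k:ℝ)) * (V (zseq (k-1)) z - V (zseq k) z)) := by
      rw [hip2]
      rw [hnq, hip1] at hdesc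
      ring_nf at hdesc c1 c2 c3 c4 hquad ⊢
      linarith [hdesc, c1, c2, c3, c4, hquad]
    have hw := mul_le_mul_of_nonneg_left step
      (by positivity : (0:ℝ) ≤ (k:ℝ)*((k:ℝ)+1))
    have heq : (k:ℝ)*((k:ℝ)+1) * ((1-γ k) * (G (zbar (k-1)) - G z + ⟪H z, zbar (k-1) - z⟫)
          + γ k * δ + γ k * ((β k + L/(k:ℝ)) * (V (zseq (k-1)) z - V (zseq k) z)))
        = ((k:ℝ)-1)*(k:ℝ) * (G (zbar (k-1)) - G z + ⟪H z, zbar (k-1) - z⟫)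
          + 2*(k:ℝ)*δ + 6*L*(V (zseq (k-1)) z - V (zseq k) z) := by
      rw [hγ, hβ]
      field_simp
      ring
    rw [heq] at hw
    linarith [hw]
  -- sum up the recursion
  have final : ∀ k, k ≤ N →
      (k:ℝ)*((k:ℝ)+1)*(G (zbar k) - G z + ⟪H z, zbar k - z⟫) + 6*L*V (zseq k) z
        ≤ (k:ℝ)*((k:ℝ)+1)*δ + 6*L*V (zseq 0) z := by
    intro k
    induction k with
    | zero => intro _; norm_num
    | succ n ih =>
      intro hn
      have h1 := key (n+1) (Nat.succ_le_succ (Nat.zero_le n)) hn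
      have h2 := ih (le_trans (Nat.le_succ n) hn)
      simp only [Nat.add_sub_cancel] at h1
      push_cast at h1 h2 ⊢
      nlinarith [h1, h2]
  have hfin := final N le_rfl
  have hVN : 0 ≤ V (zseq N) z := le_trans (by positivity) (hVlb _ (hzseqZ N le_rfl) _ hz)
  have hV0 : 0 ≤ V (zseq 0) z := le_trans (by positivity) (hVlb _ hz0 _ hz)
  have hN0 : (0:ℝ) < (N:ℝ) := by exact_mod_cast hN
  have hLV0 : 0 ≤ 6*L*V (zseq 0) z := by positivity
  have hLVN : 0 ≤ 6*L*V (zseq N) z := by positivity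
  have h1 : (G (zbar N) - G z + ⟪H z, zbar N - z⟫ - δ) * ((N:ℝ)*((N:ℝ)+1))
      ≤ 6*L*V (zseq 0) z := by nlinarith [hfin, hLVN]
  have h2 : G (zbar N) - G z + ⟪H z, zbar N - z⟫ - δ
      ≤ 6*L*V (zseq 0) z / ((N:ℝ)*((N:ℝ)+1)) := by
    rw [le_div_iff₀ (by positivity)]
    exact h1
  have h3 : 6*L*V (zseq 0) z / ((N:ℝ)*((N:ℝ)+1)) ≤ 6*L*V (zseq 0) z / (N:ℝ)^2 := by
    apply div_le_div_of_nonneg_left hLV0 (by positivity) (by nlinarith)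
  linarith [h2, h3]
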